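/- arXiv:1812.03930 — 3 statements merged into one kernel-verified Lean document; each statement's English description precedes it below -/
import Mathlib

section
/- If n is odd, then any two transverse maximal isotropic n-planes in ℝ^{n,n} have opposite sign τ; if n is even, then any two transverse maximal isotropic n-planes have the same sign τ. -/
/-!
Write `A(x, y)` for the matrix with rows `x₁, …, xₙ, y₁, …, yₙ`; `tauMat n x y` is the transpose
of `A(x, y)` with its last `n` rows reversed, so `det (tauMat n x y) = ± det A(x, y)` with a sign
depending only on `n`. For `J = diag(1, …, 1, -1, …, -1)` the product `A(x, y) J A(x', y')ᵀ` is
the block Gram matrix of the two families. For `(x, y) = (v, v')` and `(x', y') = (w, v)`, isotropy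
of `H₁` and duality make it block lower triangular with diagonal blocks `G = (⟨vᵢ, wⱼ⟩)` and `1`:
`det A(v, v') · (-1)ⁿ · det A(w, v) = det G`, and likewise
`det A(w, w') · (-1)ⁿ · det A(v, w) = det Gᵀ`. Exchanging the two halves of the rows costs `(-1)ⁿ`,
and `det A(v, w) ≠ 0` by transversality, so `det A(w, w') = (-1)ⁿ det A(v, v')`.
-/

noncomputable def bform (n : ℕ) (x y : Fin (n+n) → ℝ) : ℝ :=
  ∑ i : Fin (n+n), (if (i : ℕ) < n then x i * y i else -(x i * y i))

noncomputable def tauMat (n : ℕ) (v v' : Fin n → Fin (n+n) → ℝ) :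
    Matrix (Fin (n+n)) (Fin (n+n)) ℝ :=
  Matrix.of fun i j => Fin.append v (fun k => v' (Fin.rev k)) j i

namespace SplitForm

open Matrix

variable {n : ℕ}

theorem bform_comm (x y : Fin (n+n) → ℝ) : bform n x y = bform n y x := by
  simp only [bform, mul_comm]

theorem bform_add_add (x y : Fin (n+n) → ℝ) :
    bform n (x + y) (x + y) = bform n x x + 2 * bform n x y + bform n y y := by
  simp only [bform, Pi.add_apply, Finset.mul_sum, ← Finset.sum_add_distrib]
  refine Finset.sum_congr rfl fun i _ => ?_
  split_ifs <;> ring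

theorem bform_eq_zero_of_isotropic {ι : Type*} {x : ι → Fin (n+n) → ℝ}
    (hx : ∀ z ∈ Submodule.span ℝ (Set.range x), bform n z z = 0) (i j : ι) :
    bform n (x i) (x j) = 0 := by
  have hi : x i ∈ Submodule.span ℝ (Set.range x) := Submodule.subset_span ⟨i, rfl⟩
  have hj : x j ∈ Submodule.span ℝ (Set.range x) := Submodule.subset_span ⟨j, rfl⟩
  have := bform_add_add (x i) (x j)
  rw [hx _ (Submodule.add_mem _ hi hj), hx _ hi, hx _ hj] at this
  linarith

noncomputable def signMatrix (n : ℕ) : Matrix (Fin (n+n)) (Fin (n+n)) ℝ :=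
  diagonal fun i => if (i : ℕ) < n then 1 else -1

theorem det_signMatrix : (signMatrix n).det = (-1) ^ n := by
  rw [signMatrix, det_diagonal, ← finSumFinEquiv.prod_comp, Fintype.prod_sum_type]
  simp

theorem mul_signMatrix_mul_transpose_apply {ι κ : Type*} [Fintype ι] [Fintype κ]
    (x : ι → Fin (n+n) → ℝ) (y : κ → Fin (n+n) → ℝ) (i : ι) (j : κ) :
    (of x * signMatrix n * (of y)ᵀ) i j = bform n (x i) (y j) := by
  rw [mul_apply, bform]
  refine Finset.sum_congr rfl fun k _ => ?_
  simp only [signMatrix, mul_diagonal, transpose_apply, of_apply]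
  split_ifs <;> ring

noncomputable def bformGram {ι κ : Type*} (n : ℕ) (x : ι → Fin (n+n) → ℝ)
    (y : κ → Fin (n+n) → ℝ) : Matrix ι κ ℝ :=
  of fun i j => bform n (x i) (y j)

theorem det_fromBlocks_zero_one_one_zero {ι : Type*} [Fintype ι] [DecidableEq ι] :
    (fromBlocks 0 1 1 0 : Matrix (ι ⊕ ι) (ι ⊕ ι) ℝ).det = (-1) ^ Fintype.card ι := by
  have h : (fromBlocks 1 1 1 0 : Matrix (ι ⊕ ι) (ι ⊕ ι) ℝ) =
      fromBlocks 1 1 0 1 * fromBlocks 0 1 1 0 := by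
    simp [fromBlocks_multiply]
  have := congrArg det h
  rw [det_fromBlocks_one₁₁, det_mul, det_fromBlocks_zero₂₁] at this
  simpa [det_neg] using this.symm

theorem det_append_swap (x y : Fin n → Fin (n+n) → ℝ) :
    (of (Fin.append y x)).det = (-1) ^ n * (of (Fin.append x y)).det := by
  have h : (of (Fin.append y x)).submatrix finSumFinEquiv finSumFinEquiv =
      fromBlocks 0 1 1 0 * (of (Fin.append x y)).submatrix finSumFinEquiv finSumFinEquiv := by
    -- `simp` would turn `Fin.natAdd n i` into `i.addNat n`, which `Fin.append_right` cannot see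
    ext (i | i) j <;>
      simp [mul_apply, Fintype.sum_sum_type, one_apply, Fin.append_left, Fin.append_right,
        -Fin.natAdd_eq_addNat]
  rw [← det_submatrix_equiv_self finSumFinEquiv, h, det_mul, det_fromBlocks_zero_one_one_zero,
    det_submatrix_equiv_self, Fintype.card_fin]

theorem det_append_mul_det_append {x y x' y' : Fin n → Fin (n+n) → ℝ} :
    (of (Fin.append x y)).det * (-1) ^ n * (of (Fin.append x' y')).det =
      (fromBlocks (bformGram n x x') (bformGram n x y') (bformGram n y x')
        (bformGram n y y')).det := by
  rw [← det_signMatrix, ← det_transpose (of (Fin.append x' y')), ← det_mul, ← det_mul,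
    ← det_submatrix_equiv_self finSumFinEquiv]
  congr 1
  ext (i | i) (j | j) <;>
    simp only [submatrix_apply, mul_signMatrix_mul_transpose_apply, bformGram,
      finSumFinEquiv_apply_left, finSumFinEquiv_apply_right, Fin.append_left, Fin.append_right,
      fromBlocks_apply₁₁, fromBlocks_apply₁₂, fromBlocks_apply₂₁, fromBlocks_apply₂₂, of_apply]

theorem transpose_bformGram {ι κ : Type*} (x : ι → Fin (n+n) → ℝ) (y : κ → Fin (n+n) → ℝ) :
    (bformGram n x y)ᵀ = bformGram n y x := by
  ext i j
  exact bform_comm _ _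

theorem det_append_mul_det_append_of_dual {x y w : Fin n → Fin (n+n) → ℝ}
    (hx : ∀ i j, bform n (x i) (x j) = 0)
    (hxy : ∀ i j, bform n (x i) (y j) = if i = j then 1 else 0) :
    (of (Fin.append x y)).det * (-1) ^ n * (of (Fin.append w x)).det = (bformGram n x w).det := by
  have hxx : bformGram n x x = 0 := by
    ext i j
    exact hx i j
  have hyx : bformGram n y x = 1 := by
    rw [← transpose_bformGram, ← transpose_one]
    congr 1
    ext i j
    exact hxy i j
  rw [det_append_mul_det_append, hxx, hyx, det_fromBlocks_zero₁₂, det_one, mul_one]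

theorem det_tauMat (x y : Fin n → Fin (n+n) → ℝ) :
    (tauMat n x y).det = Equiv.Perm.sign (Fin.revPerm : Equiv.Perm (Fin n)) *
      (of (Fin.append x y)).det := by
  set σ : Equiv.Perm (Fin (n+n)) :=
    (finSumFinEquiv.symm.trans (Equiv.Perm.sumCongr 1 Fin.revPerm)).trans finSumFinEquiv
  have h : tauMat n x y = ((of (Fin.append x y)).submatrix σ id)ᵀ := by
    ext i j
    induction j using Fin.addCases <;>
      simp [tauMat, σ, Fin.append_left, Fin.append_right, -Fin.natAdd_eq_addNat]
  rw [h, det_transpose, det_permute, Equiv.Perm.sign_symm_trans_trans, Equiv.Perm.sign_sumCongr,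
    Equiv.Perm.sign_one, one_mul]

theorem _root_.LinearIndependent.fin_append {R M : Type*} [Ring R] [AddCommGroup M] [Module R M]
    {m : ℕ} {x y : Fin m → M} (hx : LinearIndependent R x) (hy : LinearIndependent R y)
    (hxy : Disjoint (Submodule.span R (Set.range x)) (Submodule.span R (Set.range y))) :
    LinearIndependent R (Fin.append x y) := by
  rw [← linearIndependent_equiv finSumFinEquiv]
  exact Fin.append_comp_sumElim ▸ hx.sum_type hy hxy

theorem det_ne_zero_of_linearIndependent {K ι : Type*} [Field K] [Fintype ι] [DecidableEq ι]
    {x : ι → ι → K} (hx : LinearIndependent K x) : (of x).det ≠ 0 :=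
  (isUnit_iff_isUnit_det _).mp (linearIndependent_rows_iff_isUnit.mp hx) |>.ne_zero

theorem det_append_dual_eq_neg_one_pow_mul {v w v' w' : Fin n → Fin (n+n) → ℝ}
    (hv : ∀ i j, bform n (v i) (v j) = 0) (hw : ∀ i j, bform n (w i) (w j) = 0)
    (hvw : (of (Fin.append v w)).det ≠ 0)
    (hvv' : ∀ i j, bform n (v i) (v' j) = if i = j then 1 else 0)
    (hww' : ∀ i j, bform n (w i) (w' j) = if i = j then 1 else 0) :
    (of (Fin.append w w')).det = (-1) ^ n * (of (Fin.append v v')).det := by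
  have hG := det_append_mul_det_append_of_dual (w := w) hv hvv'
  have hG' := det_append_mul_det_append_of_dual (w := v) hw hww'
  rw [det_append_swap v w] at hG
  rw [← transpose_bformGram, det_transpose, ← hG] at hG'
  have hε : (-1 : ℝ) ^ n * (of (Fin.append v w)).det ≠ 0 := by simp [hvw]
  exact mul_right_cancel₀ hε (by linear_combination hG')

end SplitForm

open SplitForm Matrix in
theorem tau_of_transverse_isotropic_planes_general (n : ℕ)
    (H₁ H₂ : Submodule ℝ (Fin (n+n) → ℝ))
    (h1iso : ∀ x ∈ H₁, bform n x x = 0)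
    (h2iso : ∀ x ∈ H₂, bform n x x = 0)
    (htrans : H₁ ⊓ H₂ = ⊥)
    (v w v' w' : Fin n → Fin (n+n) → ℝ)
    (hvli : LinearIndependent ℝ v) (hvsp : Submodule.span ℝ (Set.range v) = H₁)
    (hwli : LinearIndependent ℝ w) (hwsp : Submodule.span ℝ (Set.range w) = H₂)
    (hvv' : ∀ i j, bform n (v i) (v' j) = if i = j then 1 else 0)
    (hww' : ∀ i j, bform n (w i) (w' j) = if i = j then 1 else 0) :
    (Odd n → (tauMat n v v').det = -(tauMat n w w').det) ∧
      (Even n → (tauMat n v v').det = (tauMat n w w').det) := by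
  have hvw : (of (Fin.append v w)).det ≠ 0 := by
    refine det_ne_zero_of_linearIndependent (hvli.fin_append hwli ?_)
    rw [hvsp, hwsp]
    exact disjoint_iff.mpr htrans
  have hA := det_append_dual_eq_neg_one_pow_mul (bform_eq_zero_of_isotropic (hvsp ▸ h1iso))
    (bform_eq_zero_of_isotropic (hwsp ▸ h2iso)) hvw hvv' hww'
  have hτ : (tauMat n w w').det = (-1) ^ n * (tauMat n v v').det := by
    rw [det_tauMat, det_tauMat, hA]
    ring
  refine ⟨fun hn => ?_, fun hn => ?_⟩
  · rw [hτ, hn.neg_one_pow]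
    ring
  · rw [hτ, hn.neg_one_pow, one_mul]

/-- if `n` is odd, two transverse maximal isotropic `n`-planes in `ℝ^{n,n}`
have opposite sign `τ`; if `n` is even they have the same sign.  The sign of each plane is
computed as the determinant of the column matrix of any basis together with its canonical
dual isotropic family. -/
theorem tau_of_transverse_isotropic_planes (n : ℕ)
    (H₁ H₂ : Submodule ℝ (Fin (n+n) → ℝ))
    (h1iso : ∀ x ∈ H₁, bform n x x = 0) (h1dim : Module.finrank ℝ H₁ = n)
    (h2iso : ∀ x ∈ H₂, bform n x x = 0) (h2dim : Module.finrank ℝ H₂ = n)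
    (htrans : H₁ ⊓ H₂ = ⊥)
    (v w v' w' : Fin n → Fin (n+n) → ℝ)
    (hvli : LinearIndependent ℝ v) (hvsp : Submodule.span ℝ (Set.range v) = H₁)
    (hwli : LinearIndependent ℝ w) (hwsp : Submodule.span ℝ (Set.range w) = H₂)
    (hv'iso : ∀ x ∈ Submodule.span ℝ (Set.range v'), bform n x x = 0)
    (hvv' : ∀ i j, bform n (v i) (v' j) = if i = j then 1 else 0)
    (hw'iso : ∀ x ∈ Submodule.span ℝ (Set.range w'), bform n x x = 0)
    (hww' : ∀ i j, bform n (w i) (w' j) = if i = j then 1 else 0) :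
    (Odd n → (tauMat n v v').det = -(tauMat n w w').det) ∧
      (Even n → (tauMat n v v').det = (tauMat n w w').det) :=
  tau_of_transverse_isotropic_planes_general n H₁ H₂ h1iso h2iso htrans v w v' w' hvli hvsp hwli
    hwsp hvv' hww'
end

section
/- Let g be an affine isometry of ℝ^{n,n−1} whose linear part A has 1 as a simple eigenvalue with spacelike eigenvector f₀ and all other eigenvalue moduli ≠ 1. If the Margulis invariant α(g) = ⟨v, f₀⟩ ≠ 0 (where v is the translational part), then the cyclic group ⟨g⟩ acts properly discontinuously on ℝ^{2n−1}. -/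
/-!
The linear form `x ↦ ⟨x, f₀⟩` is invariant under `A`, since `A` is an isometry fixing `f₀`,
so it grows by exactly `α(g) = ⟨v, f₀⟩` along each application of `g` and by `k α(g)` along `g^k`.
It is bounded on a compact set `K`, by `C` say, so `g^k K ∩ K ≠ ∅` forces `|k α(g)| ≤ 2 C`,
which leaves only finitely many `k` when `α(g) ≠ 0`.
-/

/-- The standard symmetric bilinear form of signature `(n,n-1)` on `ℝ^{2n-1}`. -/
noncomputable def cform (n : ℕ) (x y : Fin (2*n - 1) → ℝ) : ℝ :=
  ∑ i : Fin (2*n - 1), (if (i : ℕ) < n then x i * y i else -(x i * y i))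

lemma cform_add_left (n : ℕ) (x y z : Fin (2*n - 1) → ℝ) :
    cform n (x + y) z = cform n x z + cform n y z := by
  simp only [cform, ← Finset.sum_add_distrib, Pi.add_apply]
  congr! 1 with i
  split_ifs <;> ring

lemma continuous_cform_left (n : ℕ) (z : Fin (2*n - 1) → ℝ) :
    Continuous fun x => cform n x z :=
  continuous_finsetSum _ fun i _ => by split_ifs <;> fun_prop

lemma cform_isometry_add_left_of_fixed {n : ℕ}
    {A : (Fin (2*n - 1) → ℝ) ≃ₗ[ℝ] (Fin (2*n - 1) → ℝ)} {f : Fin (2*n - 1) → ℝ}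
    (hiso : ∀ x y, cform n (A x) (A y) = cform n x y) (hf : A f = f) (x v : Fin (2*n - 1) → ℝ) :
    cform n (A x + v) f = cform n x f + cform n v f := by
  rw [cform_add_left, ← hiso x f, hf]

section Drift

variable {X : Type*} {g : Equiv.Perm X}

lemma map_zpow_apply_of_map_apply_eq_add {M : Type*} [AddCommGroup M] {φ : X → M} {a : M}
    (h : ∀ x, φ (g x) = φ x + a) (k : ℤ) (x : X) : φ ((g ^ k) x) = φ x + k • a := by
  induction k using Int.induction_on generalizing x with
  | zero => simp
  | succ k ih =>
    rw [zpow_add_one, Equiv.Perm.mul_apply, ih, h, add_zsmul, one_zsmul]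
    abel
  | pred k ih =>
    have hinv : φ (g⁻¹ x) = φ x - a := by
      rw [eq_sub_iff_add_eq, ← h]
      simp
    rw [zpow_sub_one, Equiv.Perm.mul_apply, ih, hinv, sub_zsmul, one_zsmul]
    abel

lemma finite_zpow_returns_of_drift [TopologicalSpace X] {φ : X → ℝ} {a : ℝ}
    (hφ : Continuous φ) (h : ∀ x, φ (g x) = φ x + a) (ha : a ≠ 0)
    {K : Set X} (hK : IsCompact K) :
    {k : ℤ | ∃ x ∈ K, (g ^ k) x ∈ K}.Finite := by
  obtain ⟨C, hC⟩ := hK.exists_bound_of_continuousOn hφ.continuousOn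
  simp only [Real.norm_eq_abs] at hC
  refine (isCompact_closedBall (0 : ℤ) (2 * C / |a|)).finite_of_discrete.subset ?_
  rintro k ⟨x, hx, hkx⟩
  have hshift : (k : ℝ) * a = φ ((g ^ k) x) - φ x := by
    rw [map_zpow_apply_of_map_apply_eq_add h, zsmul_eq_mul]
    ring
  have hbound : |(k : ℝ)| * |a| ≤ 2 * C := by
    rw [← abs_mul, hshift]
    linarith [abs_sub (φ ((g ^ k) x)) (φ x), hC x hx, hC _ hkx]
  rw [Metric.mem_closedBall, Int.dist_eq, Int.cast_zero, sub_zero, le_div_iff₀ (abs_pos.2 ha)]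
  exact hbound

end Drift

theorem nonzero_margulis_invariant_implies_proper_general (n : ℕ)
    (A : (Fin (2*n - 1) → ℝ) ≃ₗ[ℝ] (Fin (2*n - 1) → ℝ)) (v f0 : Fin (2*n - 1) → ℝ)
    (hiso : ∀ x y, cform n (A x) (A y) = cform n x y)
    (hf0 : A f0 = f0)
    (halpha : cform n v f0 ≠ 0) :
    ∀ K : Set (Fin (2*n - 1) → ℝ), IsCompact K →
      {k : ℤ | ∃ x ∈ K, ((A.toEquiv.trans (Equiv.addRight v)) ^ k) x ∈ K}.Finite :=
  fun _ hK => finite_zpow_returns_of_drift (continuous_cform_left n f0)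
    (cform_isometry_add_left_of_fixed hiso hf0 · v) halpha hK

/-- if the Margulis invariant `α(g) = ⟨v, f₀⟩` of an affine isometry
`g : x ↦ A x + v` of `ℝ^{n,n-1}` (with `A ∈ SO(n,n-1)` having `1` as a simple eigenvalue
with spacelike eigenvector `f₀` and all other real eigenvalue moduli `≠ 1`) is nonzero,
then the cyclic group generated by `g` acts properly discontinuously on `ℝ^{2n-1}`. -/
theorem nonzero_margulis_invariant_implies_proper (n : ℕ) (hn : 1 ≤ n)
    (A : (Fin (2*n - 1) → ℝ) ≃ₗ[ℝ] (Fin (2*n - 1) → ℝ)) (v f0 : Fin (2*n - 1) → ℝ)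
    (hiso : ∀ x y, cform n (A x) (A y) = cform n x y)
    (hdet : LinearMap.det A.toLinearMap = 1)
    (hf0 : A f0 = f0) (hf0ne : f0 ≠ 0) (hspace : 0 < cform n f0 f0)
    (hker : ∀ x, A x = x → x ∈ Submodule.span ℝ ({f0} : Set (Fin (2*n - 1) → ℝ)))
    (heig : ∀ (c : ℝ) (x : Fin (2*n - 1) → ℝ), x ≠ 0 → A x = c • x → c = 1 ∨ |c| ≠ 1)
    (halpha : cform n v f0 ≠ 0) :
    ∀ K : Set (Fin (2*n - 1) → ℝ), IsCompact K →
      {k : ℤ | ∃ x ∈ K, ((A.toEquiv.trans (Equiv.addRight v)) ^ k) x ∈ K}.Finite :=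
  nonzero_margulis_invariant_implies_proper_general n A v f0 hiso hf0 halpha
end

section
/- Let c_r be the linear map of ℝ^{2n} scaling the first 2n−1 coordinates by 1/r and fixing the last. If g_r is a differentiable path in SO(n,n) (block form with (2n−1)×(2n−1) block A_r, column v_r, row w_rᵀ, scalar b_r) with g₀ the image of h ∈ SO(n,n−1) (so A₀ = h, v₀ = 0, w₀ = 0, b₀ = 1), then c_r g_r c_r^{−1} converges as r → 0 to the affine transformation with linear part h and translational part u = (d/dr)|_{r=0} v_r. -/
/-- The block matrix `g_r = [[A_r, v_r],[w_rᵀ, b_r]]`. -/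
noncomputable def Gmat (n : ℕ) (A : ℝ → Matrix (Fin (2*n - 1)) (Fin (2*n - 1)) ℝ)
    (vv w : ℝ → Fin (2*n - 1) → ℝ) (b : ℝ → ℝ) (r : ℝ) :
    Matrix (Fin (2*n - 1) ⊕ Unit) (Fin (2*n - 1) ⊕ Unit) ℝ :=
  Matrix.fromBlocks (A r) (Matrix.of fun i (_ : Unit) => vv r i)
    (Matrix.of fun (_ : Unit) j => w r j) (Matrix.of fun _ _ => b r)

/-- The rescaling `c_r`, scaling the first `2n-1` coordinates by `1/r`. -/
noncomputable def cmat (n : ℕ) (r : ℝ) :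
    Matrix (Fin (2*n - 1) ⊕ Unit) (Fin (2*n - 1) ⊕ Unit) ℝ :=
  Matrix.fromBlocks (r⁻¹ • (1 : Matrix (Fin (2*n - 1)) (Fin (2*n - 1)) ℝ)) 0 0
    (1 : Matrix Unit Unit ℝ)

/-- The inverse rescaling `c_r⁻¹`. -/
noncomputable def cmatInv (n : ℕ) (r : ℝ) :
    Matrix (Fin (2*n - 1) ⊕ Unit) (Fin (2*n - 1) ⊕ Unit) ℝ :=
  Matrix.fromBlocks (r • (1 : Matrix (Fin (2*n - 1)) (Fin (2*n - 1)) ℝ)) 0 0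
    (1 : Matrix Unit Unit ℝ)

/-- The form of signature `(n,n-1)` on the first block. -/
noncomputable def Jmat (n : ℕ) : Matrix (Fin (2*n - 1)) (Fin (2*n - 1)) ℝ :=
  Matrix.diagonal fun i => if (i : ℕ) < n then (1 : ℝ) else -1

/-- The block-diagonal form of signature `(n,n)` on `ℝ^{2n} = ℝ^{2n-1} ⊕ ℝ^{0,1}`. -/
noncomputable def Qmat (n : ℕ) : Matrix (Fin (2*n - 1) ⊕ Unit) (Fin (2*n - 1) ⊕ Unit) ℝ :=
  Matrix.fromBlocks (Jmat n) 0 0 (Matrix.of fun _ _ => (-1 : ℝ))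

/-!
Conjugation by `c_r` divides the column `v_r` by `r` and multiplies the row `w_r` by `r`. Since
`v₀ = 0`, `v_r / r` is a difference quotient of `v` at `0`, hence tends to `u`; the other blocks
converge by continuity.
-/

open Filter Topology Matrix

lemma Matrix.tendsto_fromBlocks_apply {ι l m n o α : Type*} [TopologicalSpace α] {F : Filter ι}
    {A : ι → Matrix n l α} {B : ι → Matrix n m α} {C : ι → Matrix o l α} {D : ι → Matrix o m α}
    {A₀ : Matrix n l α} {B₀ : Matrix n m α} {C₀ : Matrix o l α} {D₀ : Matrix o m α}
    (hA : ∀ i j, Tendsto (fun t => A t i j) F (𝓝 (A₀ i j)))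
    (hB : ∀ i j, Tendsto (fun t => B t i j) F (𝓝 (B₀ i j)))
    (hC : ∀ i j, Tendsto (fun t => C t i j) F (𝓝 (C₀ i j)))
    (hD : ∀ i j, Tendsto (fun t => D t i j) F (𝓝 (D₀ i j))) :
    ∀ i j, Tendsto (fun t => fromBlocks (A t) (B t) (C t) (D t) i j) F
      (𝓝 (fromBlocks A₀ B₀ C₀ D₀ i j)) := by
  rintro (i | i) (j | j)
  exacts [hA i j, hB i j, hC i j, hD i j]

lemma cmat_mul_Gmat_mul_cmatInv (n : ℕ) (A : ℝ → Matrix (Fin (2*n - 1)) (Fin (2*n - 1)) ℝ)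
    (vv w : ℝ → Fin (2*n - 1) → ℝ) (b : ℝ → ℝ) {r : ℝ} (hr : r ≠ 0) :
    cmat n r * Gmat n A vv w b r * cmatInv n r =
      fromBlocks (A r) (of fun i (_ : Unit) => r⁻¹ * vv r i)
        (of fun (_ : Unit) j => r * w r j) (of fun _ _ => b r) := by
  ext (i | i) (j | j) <;> simp [cmat, cmatInv, Gmat, fromBlocks_multiply, hr]

theorem conjugated_path_converges_to_affine_general (n : ℕ)
    (A : ℝ → Matrix (Fin (2*n - 1)) (Fin (2*n - 1)) ℝ)
    (vv w : ℝ → Fin (2*n - 1) → ℝ) (b : ℝ → ℝ)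
    (h : Matrix (Fin (2*n - 1)) (Fin (2*n - 1)) ℝ) (u : Fin (2*n - 1) → ℝ)
    (hA0 : A 0 = h) (hv0 : vv 0 = 0) (hb0 : b 0 = 1)
    (hAdiff : ∀ i j, DifferentiableAt ℝ (fun r => A r i j) 0)
    (hvder : ∀ i, HasDerivAt (fun r => vv r i) (u i) 0)
    (hwdiff : ∀ j, DifferentiableAt ℝ (fun r => w r j) 0)
    (hbdiff : DifferentiableAt ℝ b 0) :
    ∀ i j, Filter.Tendsto
      (fun r => (cmat n r * Gmat n A vv w b r * cmatInv n r) i j)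
      (nhdsWithin 0 (Set.Ioi 0))
      (nhds ((Matrix.fromBlocks h (Matrix.of fun i (_ : Unit) => u i) 0
        (1 : Matrix Unit Unit ℝ)) i j)) := by
  intro i j
  have hconj : (fun r => fromBlocks (A r) (of fun i (_ : Unit) => r⁻¹ * vv r i)
        (of fun (_ : Unit) j => r * w r j) (of fun _ _ => b r) i j) =ᶠ[𝓝[≠] 0]
      fun r => (cmat n r * Gmat n A vv w b r * cmatInv n r) i j :=
    eventually_nhdsWithin_of_forall fun r hr => by
      simp only [cmat_mul_Gmat_mul_cmatInv n A vv w b hr]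
  refine ((tendsto_fromBlocks_apply ?_ ?_ ?_ ?_ i j).congr' hconj).mono_left (nhdsGT_le_nhdsNE 0)
  · intro i j
    exact hA0 ▸ (hAdiff i j).continuousAt.tendsto.mono_left nhdsWithin_le_nhds
  · intro i _
    simpa [hv0] using (hvder i).tendsto_slope_zero
  · intro _ j
    simpa using (tendsto_id.mul (hwdiff j).continuousAt.tendsto).mono_left nhdsWithin_le_nhds
  · intro _ _
    simpa [hb0] using hbdiff.continuousAt.tendsto.mono_left nhdsWithin_le_nhds

/-- if `g_r` is a differentiable path in `SO(n,n)` with `g₀` the image of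
`h ∈ SO(n,n-1)`, then `c_r g_r c_r⁻¹` converges entrywise, as `r → 0⁺`, to the affine
transformation `[[h, u],[0,1]]` where `u = (d/dr)|₀ v_r`. -/
theorem conjugated_path_converges_to_affine (n : ℕ) (hn : 1 ≤ n)
    (A : ℝ → Matrix (Fin (2*n - 1)) (Fin (2*n - 1)) ℝ)
    (vv w : ℝ → Fin (2*n - 1) → ℝ) (b : ℝ → ℝ)
    (h : Matrix (Fin (2*n - 1)) (Fin (2*n - 1)) ℝ) (u : Fin (2*n - 1) → ℝ)
    (hA0 : A 0 = h) (hv0 : vv 0 = 0) (hw0 : w 0 = 0) (hb0 : b 0 = 1)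
    (hSOh : h.transpose * Jmat n * h = Jmat n ∧ h.det = 1)
    (hSO : ∀ r : ℝ,
      (Gmat n A vv w b r).transpose * Qmat n * Gmat n A vv w b r = Qmat n ∧
        (Gmat n A vv w b r).det = 1)
    (hAdiff : ∀ i j, DifferentiableAt ℝ (fun r => A r i j) 0)
    (hvder : ∀ i, HasDerivAt (fun r => vv r i) (u i) 0)
    (hwdiff : ∀ j, DifferentiableAt ℝ (fun r => w r j) 0)
    (hbdiff : DifferentiableAt ℝ b 0) :
    ∀ i j, Filter.Tendsto
      (fun r => (cmat n r * Gmat n A vv w b r * cmatInv n r) i j)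
      (nhdsWithin 0 (Set.Ioi 0))
      (nhds ((Matrix.fromBlocks h (Matrix.of fun i (_ : Unit) => u i) 0
        (1 : Matrix Unit Unit ℝ)) i j)) :=
  conjugated_path_converges_to_affine_general n A vv w b h u hA0 hv0 hb0 hAdiff hvder hwdiff hbdiff
end
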